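/- arXiv:2010.08163 — 7 statements merged into one kernel-verified Lean document; each statement's English description precedes it below -/
import Mathlib

section
/- Assume 0 < π0 < 1 and π1, π2, π3 > 0. Then the steady-state length L_ss is positive and satisfies the steady-state relation J_ss·(1 − 2·L_ss) − π0 − π1·J_ss·L_ss = 0, where J_ss = 1/(1 + 2π2·L_ss + 2π3·L_ss²). -/
noncomputable section

/-- Steady-state length `L_ss`. -/
def Lss (π0 π1 π2 π3 : ℝ) : ℝ :=
  ((1 + π0 * π2 + π1 / 2) / (2 * π0 * π3)) *
    (Real.sqrt (1 + 2 * (1 - π0) * π0 * π3 / (1 + π0 * π2 + π1 / 2) ^ 2) - 1)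

/-- Steady-state flux `J_ss`. -/
def Jss (π0 π1 π2 π3 : ℝ) : ℝ :=
  1 / (1 + 2 * π2 * Lss π0 π1 π2 π3 + 2 * π3 * (Lss π0 π1 π2 π3) ^ 2)

/-! `L_ss` is the root `(-a + √(a² + cd))/c = (a/c)(√(1 + cd/a²) - 1)` of the quadratic
`c L² + 2a L = d` with `a = 1 + π₀π₂ + π₁/2`, `c = 2π₀π₃`, `d = 1 - π₀`; it is positive because
`cd > 0`. Clearing the denominator of `J_ss`, the steady-state relation is exactly this quadratic. -/

def quadraticPosRoot (a c d : ℝ) : ℝ :=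
  a / c * (Real.sqrt (1 + c * d / a ^ 2) - 1)

theorem quadraticPosRoot_spec {a c d : ℝ} (ha : a ≠ 0) (hc : c ≠ 0)
    (hdisc : 0 ≤ 1 + c * d / a ^ 2) :
    c * quadraticPosRoot a c d ^ 2 + 2 * a * quadraticPosRoot a c d = d := by
  unfold quadraticPosRoot
  generalize hs : Real.sqrt (1 + c * d / a ^ 2) = s
  have hs2 : s ^ 2 = 1 + c * d / a ^ 2 := hs ▸ Real.sq_sqrt hdisc
  field_simp at hs2 ⊢
  linear_combination hs2

theorem quadraticPosRoot_pos {a c d : ℝ} (ha : 0 < a) (hc : 0 < c) (hd : 0 < d) :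
    0 < quadraticPosRoot a c d := by
  have hs : 1 < Real.sqrt (1 + c * d / a ^ 2) := by
    rw [Real.lt_sqrt zero_le_one]
    have : 0 < c * d / a ^ 2 := by positivity
    linarith
  exact mul_pos (div_pos ha hc) (sub_pos.mpr hs)

theorem Lss_eq_quadraticPosRoot (π0 π1 π2 π3 : ℝ) :
    Lss π0 π1 π2 π3 = quadraticPosRoot (1 + π0 * π2 + π1 / 2) (2 * π0 * π3) (1 - π0) := by
  unfold Lss quadraticPosRoot
  ring_nf

theorem flux_relation_of_quadratic {π0 π1 π2 π3 L : ℝ}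
    (hD : 1 + 2 * π2 * L + 2 * π3 * L ^ 2 ≠ 0)
    (hL : 2 * π0 * π3 * L ^ 2 + 2 * (1 + π0 * π2 + π1 / 2) * L = 1 - π0) :
    1 / (1 + 2 * π2 * L + 2 * π3 * L ^ 2) * (1 - 2 * L) - π0 -
      π1 * (1 / (1 + 2 * π2 * L + 2 * π3 * L ^ 2)) * L = 0 := by
  generalize hJ : 1 + 2 * π2 * L + 2 * π3 * L ^ 2 = D at hD
  field_simp
  linear_combination -hL + π0 * hJ

/-- For `0 < π0 < 1` and `π1, π2, π3 > 0`, the steady-state length is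
positive and satisfies the steady-state relation
`J_ss·(1 − 2·L_ss) − π0 − π1·J_ss·L_ss = 0`. -/
theorem steady_state_relation (π0 π1 π2 π3 : ℝ)
    (hπ0 : 0 < π0) (hπ0' : π0 < 1) (hπ1 : 0 < π1) (hπ2 : 0 < π2) (hπ3 : 0 < π3) :
    0 < Lss π0 π1 π2 π3 ∧
    Jss π0 π1 π2 π3 * (1 - 2 * Lss π0 π1 π2 π3) - π0 -
      π1 * Jss π0 π1 π2 π3 * Lss π0 π1 π2 π3 = 0 := by
  have ha : 0 < 1 + π0 * π2 + π1 / 2 := by positivity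
  have hc : 0 < 2 * π0 * π3 := by positivity
  have hd : 0 < 1 - π0 := sub_pos.mpr hπ0'
  have hLpos : 0 < Lss π0 π1 π2 π3 := by
    rw [Lss_eq_quadraticPosRoot]
    exact quadraticPosRoot_pos ha hc hd
  have hquad := quadraticPosRoot_spec (d := 1 - π0) ha.ne' hc.ne' (by positivity)
  rw [← Lss_eq_quadraticPosRoot] at hquad
  exact ⟨hLpos, flux_relation_of_quadratic (by positivity) hquad⟩
end
end

section
/- Assume 0 < π0 < 1 and π1, π2, π3 > 0. If (L1, L2) ∈ Ω satisfies F1(L1,L2) = 0 and F2(L1,L2) = 0, then L1 = L2 = L_ss. In other words, (L_ss, L_ss) is the unique fixed point of the vector field F in Ω. -/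
/-!
Since `F1 - F2 = π1 J (L2 - L1)` and `J > 0` on `Ω`, a fixed point lies on the diagonal
`L1 = L2 = L`. There, clearing the denominator of `J` turns `F1 = 0` into the quadratic
`c L² + 2 a L = 1 - π0` with `c = 2 π0 π3` and `a = 1 + π0 π2 + π1 / 2`. Completing the square,
`(c L + a)² = a² (1 + c (1 - π0) / a²)`, and since `c L + a > 0` this pins down `L = L_ss`.
-/

noncomputable section

/-- The flux `J(L1, L2)`. -/
def J (π2 π3 L1 L2 : ℝ) : ℝ :=
  1 / (1 + π2 * (L1 + L2) + π3 * (L1 ^ 2 + L2 ^ 2))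

/-- The first component of the vector field. -/
def F1 (π0 π1 π2 π3 L1 L2 : ℝ) : ℝ :=
  J π2 π3 L1 L2 * (1 - L1 - L2) - π0 - π1 * J π2 π3 L1 L2 * L1

/-- The second component of the vector field. -/
def F2 (π0 π1 π2 π3 L1 L2 : ℝ) : ℝ :=
  J π2 π3 L1 L2 * (1 - L1 - L2) - π0 - π1 * J π2 π3 L1 L2 * L2

/-- The domain `Ω`. -/
def Omega : Set (ℝ × ℝ) := {p | 0 ≤ p.1 ∧ 0 ≤ p.2 ∧ p.1 + p.2 ≤ 1}

theorem eq_div_mul_sqrt_sub_one_of_quadratic {a c d x : ℝ} (ha : 0 < a) (hc : c ≠ 0)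
    (hx : 0 ≤ c * x + a) (h : c * x ^ 2 + 2 * a * x = d) :
    x = a / c * (Real.sqrt (1 + c * d / a ^ 2) - 1) := by
  have hsq : 1 + c * d / a ^ 2 = ((c * x + a) / a) ^ 2 := by
    field_simp
    linear_combination (-c) * h
  rw [hsq, Real.sqrt_sq (by positivity)]
  field_simp
  ring

theorem J_pos {π2 π3 L1 L2 : ℝ} (hπ2 : 0 ≤ π2) (hπ3 : 0 ≤ π3) (hL1 : 0 ≤ L1) (hL2 : 0 ≤ L2) :
    0 < J π2 π3 L1 L2 := by
  unfold J
  positivity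

theorem F1_sub_F2 (π0 π1 π2 π3 L1 L2 : ℝ) :
    F1 π0 π1 π2 π3 L1 L2 - F2 π0 π1 π2 π3 L1 L2 = π1 * J π2 π3 L1 L2 * (L2 - L1) := by
  unfold F1 F2
  ring

theorem eq_of_F1_eq_F2 {π0 π1 π2 π3 L1 L2 : ℝ} (hπ1 : π1 ≠ 0) (hJ : J π2 π3 L1 L2 ≠ 0)
    (h : F1 π0 π1 π2 π3 L1 L2 = F2 π0 π1 π2 π3 L1 L2) : L1 = L2 := by
  have hzero : π1 * J π2 π3 L1 L2 * (L2 - L1) = 0 := by rw [← F1_sub_F2, h, sub_self]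
  exact (sub_eq_zero.mp ((mul_eq_zero.mp hzero).resolve_left (mul_ne_zero hπ1 hJ))).symm

theorem quadratic_of_F1_self_eq_zero {π0 π1 π2 π3 L : ℝ} (hJ : J π2 π3 L L ≠ 0)
    (h : F1 π0 π1 π2 π3 L L = 0) :
    2 * π0 * π3 * L ^ 2 + 2 * (1 + π0 * π2 + π1 / 2) * L = 1 - π0 := by
  set D := 1 + π2 * (L + L) + π3 * (L ^ 2 + L ^ 2)
  have hJD : J π2 π3 L L * D = 1 := one_div_mul_cancel (by simpa [J] using hJ)
  unfold F1 at h
  linear_combination (-D) * h + (1 - 2 * L - π1 * L) * hJD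

theorem unique_fixed_point_general (π0 π1 π2 π3 : ℝ)
    (hπ0 : 0 < π0) (hπ1 : 0 < π1) (hπ2 : 0 < π2) (hπ3 : 0 < π3)
    (L1 L2 : ℝ) (hΩ : (L1, L2) ∈ Omega)
    (hF1 : F1 π0 π1 π2 π3 L1 L2 = 0) (hF2 : F2 π0 π1 π2 π3 L1 L2 = 0) :
    L1 = Lss π0 π1 π2 π3 ∧ L2 = Lss π0 π1 π2 π3 := by
  obtain ⟨hL1, hL2, -⟩ : 0 ≤ L1 ∧ 0 ≤ L2 ∧ L1 + L2 ≤ 1 := hΩ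
  have hJ := J_pos hπ2.le hπ3.le hL1 hL2
  obtain rfl : L1 = L2 := eq_of_F1_eq_F2 hπ1.ne' hJ.ne' (hF1.trans hF2.symm)
  have hquad := quadratic_of_F1_self_eq_zero hJ.ne' hF1
  have hL : L1 = Lss π0 π1 π2 π3 := by
    rw [eq_div_mul_sqrt_sub_one_of_quadratic (by positivity) (by positivity) (by positivity) hquad,
      Lss]
    congr 4
    ring
  exact ⟨hL, hL⟩

/-- `(L_ss, L_ss)` is the unique fixed point of the vector field in `Ω`. -/
theorem unique_fixed_point (π0 π1 π2 π3 : ℝ)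
    (hπ0 : 0 < π0) (hπ0' : π0 < 1) (hπ1 : 0 < π1) (hπ2 : 0 < π2) (hπ3 : 0 < π3)
    (L1 L2 : ℝ) (hΩ : (L1, L2) ∈ Omega)
    (hF1 : F1 π0 π1 π2 π3 L1 L2 = 0) (hF2 : F2 π0 π1 π2 π3 L1 L2 = 0) :
    L1 = Lss π0 π1 π2 π3 ∧ L2 = Lss π0 π1 π2 π3 :=
  unique_fixed_point_general π0 π1 π2 π3 hπ0 hπ1 hπ2 hπ3 L1 L2 hΩ hF1 hF2
end
end

section
/- Assume π1 > 0 and π2, π3 > 0. The active disassembly model is not a gradient system: there is no twice continuously differentiable function E defined on the interior of Ω such that ∂E/∂L1 = F1 and ∂E/∂L2 = F2 throughout the interior of Ω. -/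
noncomputable section

/-- The interior of the domain `Ω`. -/
def intOmega : Set (ℝ × ℝ) := {p | 0 < p.1 ∧ 0 < p.2 ∧ p.1 + p.2 < 1}

/-!
By the symmetry of second derivatives (Schwarz), a `C²` potential `E` with `∇E = (F1, F2)` forces
`∂F1/∂L2 = ∂F2/∂L1`. But `F2 (L1, L2) = F1 (L2, L1)`, and differentiating the flux gives
`∂F1/∂L2 - ∂F2/∂L1 = J² (L1 - L2) (π1 π2 + 2 π3 (1 - L1 - L2))`,
which is nonzero at any interior point off the diagonal, e.g. `(1/2, 1/4)`.
-/

open Filter Topology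

section MixedPartials

variable {G : Type*} [NormedAddCommGroup G] [NormedSpace ℝ G]

theorem HasFDerivAt.hasDerivAt_partial_fst {φ : ℝ × ℝ → G} {φ' : ℝ × ℝ →L[ℝ] G}
    {p : ℝ × ℝ} (h : HasFDerivAt φ φ' p) :
    HasDerivAt (fun x => φ (x, p.2)) (φ' (1, 0)) p.1 := by
  simpa [Function.comp_def] using
    h.comp_hasDerivAt p.1 ((hasDerivAt_id p.1).prodMk (hasDerivAt_const p.1 p.2))

theorem HasFDerivAt.hasDerivAt_partial_snd {φ : ℝ × ℝ → G} {φ' : ℝ × ℝ →L[ℝ] G}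
    {p : ℝ × ℝ} (h : HasFDerivAt φ φ' p) :
    HasDerivAt (fun y => φ (p.1, y)) (φ' (0, 1)) p.2 := by
  simpa [Function.comp_def] using
    h.comp_hasDerivAt p.2 ((hasDerivAt_const p.2 p.1).prodMk (hasDerivAt_id p.2))

theorem hasDerivAt_partial_snd_fderiv_apply {φ : ℝ × ℝ → G} {p : ℝ × ℝ}
    (h : DifferentiableAt ℝ (fderiv ℝ φ) p) (v : ℝ × ℝ) :
    HasDerivAt (fun y => fderiv ℝ φ (p.1, y) v) (fderiv ℝ (fderiv ℝ φ) p (0, 1) v) p.2 :=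
  ((ContinuousLinearMap.apply ℝ G v).hasFDerivAt.comp p h.hasFDerivAt).hasDerivAt_partial_snd

theorem hasDerivAt_partial_fst_fderiv_apply {φ : ℝ × ℝ → G} {p : ℝ × ℝ}
    (h : DifferentiableAt ℝ (fderiv ℝ φ) p) (v : ℝ × ℝ) :
    HasDerivAt (fun x => fderiv ℝ φ (x, p.2) v) (fderiv ℝ (fderiv ℝ φ) p (1, 0) v) p.1 :=
  ((ContinuousLinearMap.apply ℝ G v).hasFDerivAt.comp p h.hasFDerivAt).hasDerivAt_partial_fst

theorem deriv_mixed_partials_eq {U : Set (ℝ × ℝ)} (hU : IsOpen U) {E f g : ℝ × ℝ → G}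
    (hE : ContDiffOn ℝ 2 E U) (hf : ∀ q ∈ U, deriv (fun x => E (x, q.2)) q.1 = f q)
    (hg : ∀ q ∈ U, deriv (fun y => E (q.1, y)) q.2 = g q) {p : ℝ × ℝ} (hp : p ∈ U)
    (hfp : DifferentiableAt ℝ (fun y => f (p.1, y)) p.2)
    (hgp : DifferentiableAt ℝ (fun x => g (x, p.2)) p.1) :
    deriv (fun y => f (p.1, y)) p.2 = deriv (fun x => g (x, p.2)) p.1 := by
  have hE₂ : ContDiffAt ℝ 2 E p := hE.contDiffAt (hU.mem_nhds hp)
  have hE' : DifferentiableAt ℝ (fderiv ℝ E) p :=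
    (hE₂.fderiv_right (m := 1) le_rfl).differentiableAt one_ne_zero
  have hdiff : ∀ q ∈ U, HasFDerivAt E (fderiv ℝ E q) q := fun q hq =>
    ((hE.differentiableOn two_ne_zero q hq).differentiableAt (hU.mem_nhds hq)).hasFDerivAt
  have hf' : ∀ q ∈ U, f q = fderiv ℝ E q (1, 0) := fun q hq => by
    rw [← hf q hq, (hdiff q hq).hasDerivAt_partial_fst.deriv]
  have hg' : ∀ q ∈ U, g q = fderiv ℝ E q (0, 1) := fun q hq => by
    rw [← hg q hq, (hdiff q hq).hasDerivAt_partial_snd.deriv]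
  have hline_snd : ∀ᶠ y in 𝓝 p.2, f (p.1, y) = fderiv ℝ E (p.1, y) (1, 0) :=
    Filter.mem_of_superset ((continuous_const.prodMk continuous_id).continuousAt.preimage_mem_nhds
      (hU.mem_nhds hp)) fun y hy => hf' _ hy
  have hline_fst : ∀ᶠ x in 𝓝 p.1, g (x, p.2) = fderiv ℝ E (x, p.2) (0, 1) :=
    Filter.mem_of_superset ((continuous_id.prodMk continuous_const).continuousAt.preimage_mem_nhds
      (hU.mem_nhds hp)) fun x hx => hg' _ hx
  calc deriv (fun y => f (p.1, y)) p.2 = fderiv ℝ (fderiv ℝ E) p (0, 1) (1, 0) :=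
        hfp.hasDerivAt.unique <|
          (hasDerivAt_partial_snd_fderiv_apply hE' (1, 0)).congr_of_eventuallyEq hline_snd
    _ = fderiv ℝ (fderiv ℝ E) p (1, 0) (0, 1) := (hE₂.isSymmSndFDerivAt (by simp)).eq _ _
    _ = deriv (fun x => g (x, p.2)) p.1 :=
        ((hasDerivAt_partial_fst_fderiv_apply hE' (0, 1)).congr_of_eventuallyEq
          hline_fst).unique hgp.hasDerivAt

end MixedPartials

theorem isOpen_intOmega : IsOpen intOmega :=
  (isOpen_lt continuous_const continuous_fst).inter <|
    (isOpen_lt continuous_const continuous_snd).inter <|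
      isOpen_lt (continuous_fst.add continuous_snd) continuous_const

theorem J_comm (π2 π3 x y : ℝ) : J π2 π3 x y = J π2 π3 y x := by
  unfold J; ring

theorem J_pos_s2 {π2 π3 x y : ℝ} (hπ2 : 0 ≤ π2) (hπ3 : 0 ≤ π3) (hx : 0 ≤ x) (hy : 0 ≤ y) :
    0 < J π2 π3 x y := by
  unfold J; positivity

section Model

variable (π0 π1 π2 π3 : ℝ)

theorem F2_eq_F1_swap (x y : ℝ) : F2 π0 π1 π2 π3 x y = F1 π0 π1 π2 π3 y x := by
  unfold F1 F2; rw [J_comm]; ring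

theorem hasDerivAt_J_snd {x y : ℝ} (hJ : J π2 π3 x y ≠ 0) :
    HasDerivAt (J π2 π3 x) (-(π2 + 2 * π3 * y) * J π2 π3 x y ^ 2) y := by
  have hD : HasDerivAt (fun y => 1 + π2 * (x + y) + π3 * (x ^ 2 + y ^ 2)) (π2 + 2 * π3 * y) y :=
    (((((hasDerivAt_id y).const_add x).const_mul π2).const_add 1).add
      (((hasDerivAt_pow 2 y).const_add (x ^ 2)).const_mul π3)).congr_deriv (by simp; ring)
  have hD0 : 1 + π2 * (x + y) + π3 * (x ^ 2 + y ^ 2) ≠ 0 := by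
    intro h; simp [J, h] at hJ
  exact ((hasDerivAt_const y (1 : ℝ)).div hD hD0).congr_deriv (by simp only [J]; field_simp; ring)

theorem hasDerivAt_F1_snd {x y : ℝ} (hJ : J π2 π3 x y ≠ 0) :
    HasDerivAt (F1 π0 π1 π2 π3 x)
      (-(π2 + 2 * π3 * y) * J π2 π3 x y ^ 2 * (1 - x - y) - J π2 π3 x y
        + π1 * (π2 + 2 * π3 * y) * J π2 π3 x y ^ 2 * x) y := by
  have hJ' := hasDerivAt_J_snd π2 π3 hJ
  exact (((hJ'.mul ((hasDerivAt_id y).const_sub (1 - x))).sub_const π0).sub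
    ((hJ'.const_mul π1).mul_const x)).congr_deriv (by simp; ring)

theorem hasDerivAt_F2_fst {x y : ℝ} (hJ : J π2 π3 x y ≠ 0) :
    HasDerivAt (fun x => F2 π0 π1 π2 π3 x y)
      (-(π2 + 2 * π3 * x) * J π2 π3 x y ^ 2 * (1 - x - y) - J π2 π3 x y
        + π1 * (π2 + 2 * π3 * x) * J π2 π3 x y ^ 2 * y) x := by
  rw [J_comm] at hJ ⊢
  simp only [F2_eq_F1_swap]
  convert hasDerivAt_F1_snd π0 π1 π2 π3 hJ using 2; ring

theorem deriv_F1_snd_sub_deriv_F2_fst {x y : ℝ} (hJ : J π2 π3 x y ≠ 0) :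
    deriv (F1 π0 π1 π2 π3 x) y - deriv (fun x => F2 π0 π1 π2 π3 x y) x =
      J π2 π3 x y ^ 2 * (x - y) * (π1 * π2 + 2 * π3 * (1 - x - y)) := by
  rw [(hasDerivAt_F1_snd π0 π1 π2 π3 hJ).deriv, (hasDerivAt_F2_fst π0 π1 π2 π3 hJ).deriv]
  ring

end Model

/-- the active disassembly model is not a gradient system: there is no
twice continuously differentiable `E` on the interior of `Ω` whose partial derivatives
agree with `F1` and `F2` there. -/
theorem not_gradient_system (π0 π1 π2 π3 : ℝ)
    (hπ1 : 0 < π1) (hπ2 : 0 < π2) (hπ3 : 0 < π3) :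
    ¬ ∃ E : ℝ × ℝ → ℝ,
      ContDiffOn ℝ 2 E intOmega ∧
      ∀ p ∈ intOmega,
        deriv (fun x => E (x, p.2)) p.1 = F1 π0 π1 π2 π3 p.1 p.2 ∧
        deriv (fun y => E (p.1, y)) p.2 = F2 π0 π1 π2 π3 p.1 p.2 := by
  rintro ⟨E, hE, hgrad⟩
  have hp : ((1 / 2 : ℝ), (1 / 4 : ℝ)) ∈ intOmega := by norm_num [intOmega]
  have hJ : 0 < J π2 π3 (1 / 2) (1 / 4) := J_pos_s2 hπ2.le hπ3.le (by norm_num) (by norm_num)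
  have hsymm := deriv_mixed_partials_eq isOpen_intOmega hE
    (f := fun q => F1 π0 π1 π2 π3 q.1 q.2) (g := fun q => F2 π0 π1 π2 π3 q.1 q.2)
    (fun q hq => (hgrad q hq).1) (fun q hq => (hgrad q hq).2) hp
    (hasDerivAt_F1_snd π0 π1 π2 π3 (x := 1 / 2) (y := 1 / 4) hJ.ne').differentiableAt
    (hasDerivAt_F2_fst π0 π1 π2 π3 (x := 1 / 2) (y := 1 / 4) hJ.ne').differentiableAt
  have hcurl := deriv_F1_snd_sub_deriv_F2_fst π0 π1 π2 π3 hJ.ne'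
  rw [hsymm, sub_self] at hcurl
  norm_num at hcurl
  rcases hcurl with hJ0 | hcoef
  · exact hJ.ne' hJ0
  · nlinarith [mul_pos hπ1 hπ2]
end
end

section
/- Assume 0 < π0 < 1 and π1, π2, π3 > 0. Let L = (L1, L2) : ℝ → ℝ² be a differentiable solution of the system L1' = F1(L1,L2), L2' = F2(L1,L2), and set ΔL_i(t) = L_i(t) − L_ss for i = 1, 2. Then for all t, (1/2)·d/dt[(ΔL1(t) + ΔL2(t))²] = 2·(J(L1(t),L2(t)) − J_ss)·(1 − 2·L_ss − π1·L_ss)·(ΔL1(t) + ΔL2(t)) − (2 + π1)·J(L1(t),L2(t))·(ΔL1(t) + ΔL2(t))². -/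
/-!
Adding the two equations gives `(L1 + L2)' = 2 J (1 - L1 - L2) - 2 π0 - π1 J (L1 + L2)`.
`L_ss` is the nonnegative root of `2 π0 π3 L² + (2 + 2 π0 π2 + π1) L - (1 - π0) = 0`, and
clearing the denominator of `J_ss` shows that this equation says exactly
`π0 = J_ss (1 - (2 + π1) L_ss)`.
Substituting this for `π0` and writing `L1 + L2 = ΔL1 + ΔL2 + 2 L_ss` turns the sum of the
equations into `(ΔL1 + ΔL2)' = 2 (J - J_ss)(1 - (2 + π1) L_ss) - (2 + π1) J (ΔL1 + ΔL2)`;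
the chain rule finishes.
-/

noncomputable section

lemma quadratic_eq_zero_of_eq_div_mul_sqrt_sub_one {p a q x : ℝ} (hp : p ≠ 0) (ha : a ≠ 0)
    (hd : 0 ≤ 1 + p * q / a ^ 2) (hx : x = a / p * (√(1 + p * q / a ^ 2) - 1)) :
    p * x ^ 2 + 2 * a * x - q = 0 := by
  have hlin : p * x + a = a * √(1 + p * q / a ^ 2) := by
    rw [hx]; field_simp; ring
  have hsq : (p * x + a) ^ 2 = a ^ 2 + p * q := by
    rw [hlin, mul_pow, Real.sq_sqrt hd]; field_simp
  have : p * (p * x ^ 2 + 2 * a * x - q) = 0 := by linear_combination hsq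
  exact (mul_eq_zero.mp this).resolve_left hp

lemma div_mul_sqrt_sub_one_nonneg {p a q : ℝ} (hp : 0 < p) (ha : 0 < a) (hq : 0 ≤ q) :
    0 ≤ a / p * (√(1 + p * q / a ^ 2) - 1) := by
  have : 1 ≤ √(1 + p * q / a ^ 2) :=
    Real.one_le_sqrt.mpr (by simp only [le_add_iff_nonneg_right]; positivity)
  exact mul_nonneg (by positivity) (by linarith)

lemma Lss_eq_div_mul_sqrt_sub_one (π0 π1 π2 π3 : ℝ) :
    Lss π0 π1 π2 π3 = (1 + π0 * π2 + π1 / 2) / (2 * π0 * π3) *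
      (√(1 + 2 * π0 * π3 * (1 - π0) / (1 + π0 * π2 + π1 / 2) ^ 2) - 1) := by
  rw [Lss]; ring_nf

section SteadyState

variable {π0 π1 π2 π3 : ℝ} (hπ0 : 0 < π0) (hπ0' : π0 < 1) (hπ1 : 0 < π1) (hπ2 : 0 < π2)
  (hπ3 : 0 < π3)
include hπ0 hπ0' hπ1 hπ2 hπ3

lemma Lss_nonneg : 0 ≤ Lss π0 π1 π2 π3 := by
  rw [Lss_eq_div_mul_sqrt_sub_one]
  exact div_mul_sqrt_sub_one_nonneg (by positivity) (by positivity) (by linarith)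

lemma Lss_quadratic_eq_zero :
    2 * π0 * π3 * Lss π0 π1 π2 π3 ^ 2 + 2 * (1 + π0 * π2 + π1 / 2) * Lss π0 π1 π2 π3
      - (1 - π0) = 0 :=
  quadratic_eq_zero_of_eq_div_mul_sqrt_sub_one (by positivity) (by positivity)
    (by have : 0 ≤ 1 - π0 := by linarith
        positivity)
    (Lss_eq_div_mul_sqrt_sub_one π0 π1 π2 π3)

lemma Jss_mul_eq : Jss π0 π1 π2 π3 * (1 - 2 * Lss π0 π1 π2 π3 - π1 * Lss π0 π1 π2 π3) = π0 := by
  have hL := Lss_nonneg hπ0 hπ0' hπ1 hπ2 hπ3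
  have hD : 0 < 1 + 2 * π2 * Lss π0 π1 π2 π3 + 2 * π3 * Lss π0 π1 π2 π3 ^ 2 := by positivity
  rw [Jss, div_mul_eq_mul_div, one_mul, div_eq_iff hD.ne']
  linear_combination -Lss_quadratic_eq_zero hπ0 hπ0' hπ1 hπ2 hπ3

end SteadyState

lemma F1_add_F2_eq {π0 π1 π2 π3 c j : ℝ} (hj : j * (1 - 2 * c - π1 * c) = π0) (L1 L2 : ℝ) :
    F1 π0 π1 π2 π3 L1 L2 + F2 π0 π1 π2 π3 L1 L2 =
      2 * (J π2 π3 L1 L2 - j) * (1 - 2 * c - π1 * c) -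
        (2 + π1) * J π2 π3 L1 L2 * ((L1 - c) + (L2 - c)) := by
  rw [F1, F2]
  linear_combination 2 * hj

/-- along any solution,
`(1/2)·d/dt[(ΔL1 + ΔL2)²]
  = 2·(J − J_ss)·(1 − 2·L_ss − π1·L_ss)·(ΔL1 + ΔL2) − (2 + π1)·J·(ΔL1 + ΔL2)²`. -/
theorem sum_deviation_evolution (π0 π1 π2 π3 : ℝ)
    (hπ0 : 0 < π0) (hπ0' : π0 < 1) (hπ1 : 0 < π1) (hπ2 : 0 < π2) (hπ3 : 0 < π3)
    (L1 L2 : ℝ → ℝ)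
    (hd1 : ∀ t : ℝ, HasDerivAt L1 (F1 π0 π1 π2 π3 (L1 t) (L2 t)) t)
    (hd2 : ∀ t : ℝ, HasDerivAt L2 (F2 π0 π1 π2 π3 (L1 t) (L2 t)) t) :
    ∀ t : ℝ,
      (1 / 2) * deriv (fun s =>
          ((L1 s - Lss π0 π1 π2 π3) + (L2 s - Lss π0 π1 π2 π3)) ^ 2) t =
        2 * (J π2 π3 (L1 t) (L2 t) - Jss π0 π1 π2 π3) *
            (1 - 2 * Lss π0 π1 π2 π3 - π1 * Lss π0 π1 π2 π3) *
            ((L1 t - Lss π0 π1 π2 π3) + (L2 t - Lss π0 π1 π2 π3)) -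
          (2 + π1) * J π2 π3 (L1 t) (L2 t) *
            ((L1 t - Lss π0 π1 π2 π3) + (L2 t - Lss π0 π1 π2 π3)) ^ 2 := by
  intro t
  set c := Lss π0 π1 π2 π3
  have hsum := (((hd1 t).sub_const c).fun_add ((hd2 t).sub_const c)).fun_pow 2
  rw [hsum.deriv, F1_add_F2_eq (Jss_mul_eq hπ0 hπ0' hπ1 hπ2 hπ3)]
  ring
end
end

section
/- Assume 0 < π0 < 1 and π1, π2, π3 > 0. Then 1 − 2·L_ss − π1·L_ss = π0/J_ss, where J_ss = 1/(1 + 2π2·L_ss + 2π3·L_ss²). -/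
/-! `L_ss` is the root `(-q + √(q² + d)) / (2p)` of `p x² + q x = d / (4p)`, with `p = π0 π3`,
`q = 1 + π0 π2 + π1 / 2` and `d = 2 (1 - π0) π0 π3`. Eliminating `π0 π3 L_ss²` from
`π0 / J_ss = π0 (1 + 2 π2 L_ss + 2 π3 L_ss²)` by this quadratic relation leaves `1 - 2 L_ss - π1 L_ss`. -/

noncomputable section

theorem mul_sq_add_mul_eq_of_eq_mul_sqrt_sub_one {p q d x : ℝ} (hp : p ≠ 0) (hq : q ≠ 0)
    (hd : 0 ≤ 1 + d / q ^ 2) (hx : x = q / (2 * p) * (Real.sqrt (1 + d / q ^ 2) - 1)) :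
    p * x ^ 2 + q * x = d / (4 * p) := by
  have ht := Real.sq_sqrt hd
  generalize Real.sqrt (1 + d / q ^ 2) = t at ht hx
  subst hx
  field_simp at ht ⊢
  linear_combination 4 * ht

theorem Lss_quadratic {π0 π1 π2 π3 : ℝ} (hπ0 : 0 < π0) (hπ0' : π0 ≤ 1) (hπ1 : 0 < π1)
    (hπ2 : 0 < π2) (hπ3 : 0 < π3) :
    π0 * π3 * Lss π0 π1 π2 π3 ^ 2 + (1 + π0 * π2 + π1 / 2) * Lss π0 π1 π2 π3 = (1 - π0) / 2 := by
  have hd : 0 ≤ 1 + 2 * (1 - π0) * π0 * π3 / (1 + π0 * π2 + π1 / 2) ^ 2 := by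
    have : 0 ≤ 1 - π0 := by linarith
    positivity
  rw [mul_sq_add_mul_eq_of_eq_mul_sqrt_sub_one (by positivity) (by positivity) hd
    (by rw [Lss]; ring)]
  field_simp
  ring

/-- `1 − 2·L_ss − π1·L_ss = π0/J_ss`. -/
theorem steady_state_identity (π0 π1 π2 π3 : ℝ)
    (hπ0 : 0 < π0) (hπ0' : π0 < 1) (hπ1 : 0 < π1) (hπ2 : 0 < π2) (hπ3 : 0 < π3) :
    1 - 2 * Lss π0 π1 π2 π3 - π1 * Lss π0 π1 π2 π3 = π0 / Jss π0 π1 π2 π3 := by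
  rw [Jss, one_div, div_inv_eq_mul]
  linear_combination (-2) * Lss_quadratic hπ0 hπ0'.le hπ1 hπ2 hπ3
end
end

section
/- Assume 0 < π0 < 1 and π1, π2, π3 > 0. Then 0 < L_ss < 1/2. -/
/-!
With `a = 1 + π0 π2 + π1 / 2`, `L_ss` is the positive root of `π0 π3 L² + a L = (1 - π0) / 2`.
Hence `a L_ss < (1 - π0) / 2`, and `1 - π0 < a` gives `L_ss < 1 / 2`.
-/

noncomputable section

open Real

/-- The root `(-a + √(a² + 2 b x)) / (2 b)` of `b L² + a L = x / 2`, written as in `Lss`. -/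
def quadRoot (a b x : ℝ) : ℝ :=
  a / (2 * b) * (√(1 + 2 * x * b / a ^ 2) - 1)

section

variable {a b x : ℝ}

theorem quadRoot_mul_add_mul_self (ha : a ≠ 0) (hb : b ≠ 0) (hxb : 0 ≤ x * b) :
    quadRoot a b x * (a + b * quadRoot a b x) = x / 2 := by
  unfold quadRoot
  set s := √(1 + 2 * x * b / a ^ 2)
  have hsq : s ^ 2 = 1 + 2 * x * b / a ^ 2 := sq_sqrt (by rw [mul_assoc]; positivity)
  calc _ = a ^ 2 / (4 * b) * (s ^ 2 - 1) := by field_simp; ring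
    _ = x / 2 := by rw [hsq]; field_simp; ring

theorem quadRoot_pos (ha : 0 < a) (hb : 0 < b) (hx : 0 < x) : 0 < quadRoot a b x := by
  have hsqrt : 1 < √(1 + 2 * x * b / a ^ 2) :=
    (lt_sqrt zero_le_one).2 (by rw [one_pow, lt_add_iff_pos_right]; positivity)
  exact mul_pos (by positivity) (sub_pos.2 hsqrt)

theorem quadRoot_lt (ha : 0 < a) (hb : 0 < b) (hx : 0 < x) : quadRoot a b x < x / (2 * a) := by
  have hL := quadRoot_pos ha hb hx
  have hroot := quadRoot_mul_add_mul_self ha.ne' hb.ne' (mul_pos hx hb).le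
  rw [lt_div_iff₀ (by positivity)]
  nlinarith [mul_pos hb (mul_pos hL hL)]

end

/-- `0 < L_ss < 1/2`. -/
theorem Lss_bounds (π0 π1 π2 π3 : ℝ)
    (hπ0 : 0 < π0) (hπ0' : π0 < 1) (hπ1 : 0 < π1) (hπ2 : 0 < π2) (hπ3 : 0 < π3) :
    0 < Lss π0 π1 π2 π3 ∧ Lss π0 π1 π2 π3 < 1 / 2 := by
  have hLss : Lss π0 π1 π2 π3 = quadRoot (1 + π0 * π2 + π1 / 2) (π0 * π3) (1 - π0) := by
    unfold Lss quadRoot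
    ring_nf
  have hx : 0 < 1 - π0 := sub_pos.2 hπ0'
  have hxa : 1 - π0 < 1 + π0 * π2 + π1 / 2 := by linarith [mul_pos hπ0 hπ2]
  have ha := hx.trans hxa
  have hb : 0 < π0 * π3 := mul_pos hπ0 hπ3
  rw [hLss]
  refine ⟨quadRoot_pos ha hb hx, (quadRoot_lt ha hb hx).trans ?_⟩
  rw [div_lt_iff₀ (by positivity)]
  linarith
end
end

section
/- Assume 0 < π0 < 1 and π1, π2, π3 > 0. Define φ(L1,L2) = (1/2)·[(ΔL1 + ΔL2)² + (π3/π1)·(ΔL1 − ΔL2)²], where ΔL_i = L_i − L_ss. Then φ is a strict Lyapunov function on Ω for the vector field F: (i) φ(L1,L2) ≥ 0 for all (L1,L2) ∈ Ω, with φ(L1,L2) = 0 if and only if L1 = L2 = L_ss; and (ii) the derivative of φ along the vector field satisfies ∇φ(L1,L2)·F(L1,L2) < 0 for every (L1,L2) ∈ Ω with (L1,L2) ≠ (L_ss, L_ss), and ∇φ(L_ss,L_ss)·F(L_ss,L_ss) = 0. -/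
noncomputable section

/-- The Lyapunov function `φ(L1, L2)`. -/
def phi (π0 π1 π2 π3 L1 L2 : ℝ) : ℝ :=
  (1 / 2) * (((L1 - Lss π0 π1 π2 π3) + (L2 - Lss π0 π1 π2 π3)) ^ 2 +
    (π3 / π1) * ((L1 - Lss π0 π1 π2 π3) - (L2 - Lss π0 π1 π2 π3)) ^ 2)

/-- The derivative of `φ` along the vector field `F`, i.e. `∇φ·F`. -/
def phiDot (π0 π1 π2 π3 L1 L2 : ℝ) : ℝ :=
  deriv (fun x => phi π0 π1 π2 π3 x L2) L1 * F1 π0 π1 π2 π3 L1 L2 +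
    deriv (fun y => phi π0 π1 π2 π3 L1 y) L2 * F2 π0 π1 π2 π3 L1 L2

/-!
`L_ss` is the nonnegative root of `π0 π3 L² + (1 + π0 π2 + π1/2) L = (1 - π0)/2`, the common
value of `L1 = L2` at which `F` vanishes. In the coordinates `σ = ΔL1 + ΔL2`, `δ = L1 - L2` the
weight `π3/π1` makes the `δ`-components of `∇φ·F` collapse to `-π3 J δ²`, and using the quadratic
equation the remaining part becomes, after multiplying by `1/J > 0`,
`-(2 + π1 + 2π0π2 + 2π0π3 L_ss) σ² - π3 (1 - 2π0 L_ss) δ² - 2π0π3 (L1 + L2) (ΔL1² + ΔL2²)`.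
On `Ω` every coefficient is nonnegative, the first two strictly since `0 ≤ L_ss < 1/2`.
-/

/-- The nonnegative root of `a x² + b x = c` (for `0 < a, b` and `0 ≤ c`), written as `L_ss` is. -/
def posRoot (a b c : ℝ) : ℝ := b / (2 * a) * (√(1 + 4 * a * c / b ^ 2) - 1)

lemma posRoot_spec {a b c : ℝ} (ha : a ≠ 0) (hb : b ≠ 0) (hdisc : 0 ≤ 1 + 4 * a * c / b ^ 2) :
    a * posRoot a b c ^ 2 + b * posRoot a b c = c := by
  have ht := Real.sq_sqrt hdisc
  unfold posRoot
  set t := √(1 + 4 * a * c / b ^ 2)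
  field_simp at ht ⊢
  linear_combination ht

lemma posRoot_nonneg {a b c : ℝ} (ha : 0 < a) (hb : 0 < b) (hc : 0 ≤ c) : 0 ≤ posRoot a b c := by
  have : 1 ≤ √(1 + 4 * a * c / b ^ 2) := Real.one_le_sqrt.mpr (by simp; positivity)
  unfold posRoot
  exact mul_nonneg (by positivity) (by linarith)

lemma Lss_eq_posRoot (π0 π1 π2 π3 : ℝ) :
    Lss π0 π1 π2 π3 = posRoot (π0 * π3) (1 + π0 * π2 + π1 / 2) ((1 - π0) / 2) := by
  unfold Lss posRoot
  ring_nf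

section SteadyState

variable {π0 π1 π2 π3 : ℝ} (hπ0 : 0 < π0) (hπ0' : π0 < 1) (hπ1 : 0 < π1) (hπ2 : 0 < π2)
  (hπ3 : 0 < π3)
include hπ0 hπ0' hπ1 hπ2 hπ3

lemma Lss_spec :
    π0 * π3 * Lss π0 π1 π2 π3 ^ 2 + (1 + π0 * π2 + π1 / 2) * Lss π0 π1 π2 π3 = (1 - π0) / 2 := by
  rw [Lss_eq_posRoot]
  exact posRoot_spec (by positivity) (by positivity) (by have := sub_pos.2 hπ0'; positivity)

lemma Lss_lt_half : Lss π0 π1 π2 π3 < 1 / 2 := by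
  have hspec := Lss_spec hπ0 hπ0' hπ1 hπ2 hπ3
  have hs := Lss_nonneg hπ0 hπ0' hπ1 hπ2 hπ3
  nlinarith [mul_nonneg (mul_pos hπ0 hπ3).le (sq_nonneg (Lss π0 π1 π2 π3)),
    mul_nonneg (by positivity : 0 ≤ π0 * π2 + π1 / 2) hs]

end SteadyState

lemma phi_comm (π0 π1 π2 π3 L1 L2 : ℝ) : phi π0 π1 π2 π3 L1 L2 = phi π0 π1 π2 π3 L2 L1 := by
  unfold phi
  ring

lemma hasDerivAt_phi_fst (π0 π1 π2 π3 L1 L2 : ℝ) :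
    HasDerivAt (fun x => phi π0 π1 π2 π3 x L2)
      ((L1 - Lss π0 π1 π2 π3) + (L2 - Lss π0 π1 π2 π3) +
        π3 / π1 * ((L1 - Lss π0 π1 π2 π3) - (L2 - Lss π0 π1 π2 π3))) L1 := by
  set s := Lss π0 π1 π2 π3
  have hsum := (((hasDerivAt_id L1).sub_const s).add_const (L2 - s)).fun_pow 2
  have hdiff := (((hasDerivAt_id L1).sub_const s).sub_const (L2 - s)).fun_pow 2
  exact ((hsum.add (hdiff.const_mul (π3 / π1))).const_mul (1 / 2 : ℝ)).congr_deriv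
    (by simp only [id]; push_cast; ring)

lemma phiDot_eq {π0 π1 π2 π3 : ℝ} (L1 L2 : ℝ) (hπ1 : π1 ≠ 0)
    (hD : 1 + π2 * (L1 + L2) + π3 * (L1 ^ 2 + L2 ^ 2) ≠ 0) :
    phiDot π0 π1 π2 π3 L1 L2 = J π2 π3 L1 L2 *
      ((L1 + L2 - 2 * Lss π0 π1 π2 π3) * (2 * (1 - (L1 + L2)) - π1 * (L1 + L2) -
        2 * π0 * (1 + π2 * (L1 + L2) + π3 * (L1 ^ 2 + L2 ^ 2))) - π3 * (L1 - L2) ^ 2) := by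
  have hsnd : (fun y => phi π0 π1 π2 π3 L1 y) = fun y => phi π0 π1 π2 π3 y L1 :=
    funext fun y => phi_comm _ _ _ _ _ _
  rw [phiDot, hsnd, (hasDerivAt_phi_fst ..).deriv, (hasDerivAt_phi_fst ..).deriv]
  unfold F1 F2 J
  field_simp
  ring

lemma lyapunov_numerator_eq {π0 π1 π2 π3 s : ℝ} (L1 L2 : ℝ)
    (hs : π0 * π3 * s ^ 2 + (1 + π0 * π2 + π1 / 2) * s = (1 - π0) / 2) :
    (L1 + L2 - 2 * s) * (2 * (1 - (L1 + L2)) - π1 * (L1 + L2) -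
        2 * π0 * (1 + π2 * (L1 + L2) + π3 * (L1 ^ 2 + L2 ^ 2))) - π3 * (L1 - L2) ^ 2 =
      -(2 + π1 + 2 * π0 * π2 + 2 * π0 * π3 * s) * (L1 + L2 - 2 * s) ^ 2
        - π3 * (1 - 2 * π0 * s) * (L1 - L2) ^ 2
        - 2 * π0 * π3 * (L1 + L2) * ((L1 - s) ^ 2 + (L2 - s) ^ 2) := by
  linear_combination (-4 * (L1 + L2 - 2 * s)) * hs

section Lyapunov

variable {π0 π1 π2 π3 : ℝ}

lemma phi_nonneg (hk : 0 ≤ π3 / π1) (L1 L2 : ℝ) : 0 ≤ phi π0 π1 π2 π3 L1 L2 := by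
  unfold phi
  positivity

lemma phi_eq_zero_iff (hk : 0 < π3 / π1) (L1 L2 : ℝ) :
    phi π0 π1 π2 π3 L1 L2 = 0 ↔ L1 = Lss π0 π1 π2 π3 ∧ L2 = Lss π0 π1 π2 π3 := by
  unfold phi
  set s := Lss π0 π1 π2 π3
  have hsum := sq_nonneg ((L1 - s) + (L2 - s))
  have hdiff := mul_nonneg hk.le (sq_nonneg ((L1 - s) - (L2 - s)))
  constructor
  · intro h
    have hσ : (L1 - s) + (L2 - s) = 0 := pow_eq_zero_iff two_ne_zero |>.1 (by linarith)
    have hδ : (L1 - s) - (L2 - s) = 0 :=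
      pow_eq_zero_iff two_ne_zero |>.1 ((mul_eq_zero.1 (by linarith)).resolve_left hk.ne')
    constructor <;> linarith
  · rintro ⟨h1, h2⟩
    simp [h1, h2]

lemma phiDot_neg (hπ0 : 0 < π0) (hπ0' : π0 < 1) (hπ1 : 0 < π1) (hπ2 : 0 < π2) (hπ3 : 0 < π3)
    {p : ℝ × ℝ} (hp : p ∈ Omega) (hne : p ≠ (Lss π0 π1 π2 π3, Lss π0 π1 π2 π3)) :
    phiDot π0 π1 π2 π3 p.1 p.2 < 0 := by
  obtain ⟨L1, L2⟩ := p
  obtain ⟨hL1, hL2, -⟩ := hp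
  have hs := Lss_nonneg hπ0 hπ0' hπ1 hπ2 hπ3
  have hs' := Lss_lt_half hπ0 hπ0' hπ1 hπ2 hπ3
  set s := Lss π0 π1 π2 π3
  have hD : 0 < 1 + π2 * (L1 + L2) + π3 * (L1 ^ 2 + L2 ^ 2) := by positivity
  have hJ : 0 < J π2 π3 L1 L2 := by unfold J; positivity
  have hoff : 0 < (L1 + L2 - 2 * s) ^ 2 + (L1 - L2) ^ 2 := by
    by_contra! h
    have hσ : L1 + L2 - 2 * s = 0 := pow_eq_zero_iff two_ne_zero |>.1 <|
      le_antisymm (by nlinarith [sq_nonneg (L1 - L2)]) (sq_nonneg _)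
    have hδ : L1 - L2 = 0 := pow_eq_zero_iff two_ne_zero |>.1 <|
      le_antisymm (by nlinarith [sq_nonneg (L1 + L2 - 2 * s)]) (sq_nonneg _)
    exact hne (Prod.ext (by dsimp only; linarith) (by dsimp only; linarith))
  have hα : 0 < 2 + π1 + 2 * π0 * π2 + 2 * π0 * π3 * s := by positivity
  have hβ : 0 < π3 * (1 - 2 * π0 * s) := mul_pos hπ3 (by nlinarith)
  have hγ : 0 ≤ 2 * π0 * π3 * (L1 + L2) * ((L1 - s) ^ 2 + (L2 - s) ^ 2) := by positivity
  show phiDot π0 π1 π2 π3 L1 L2 < 0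
  rw [phiDot_eq _ _ hπ1.ne' hD.ne', lyapunov_numerator_eq _ _ (Lss_spec hπ0 hπ0' hπ1 hπ2 hπ3)]
  refine mul_neg_of_pos_of_neg hJ ?_
  obtain ⟨m, hm, hmα, hmβ⟩ : ∃ m, 0 < m ∧ m ≤ _ ∧ m ≤ _ :=
    ⟨_, lt_min hα hβ, min_le_left _ _, min_le_right _ _⟩
  nlinarith [mul_le_mul_of_nonneg_right hmα (sq_nonneg (L1 + L2 - 2 * s)),
    mul_le_mul_of_nonneg_right hmβ (sq_nonneg (L1 - L2)), mul_pos hm hoff]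

end Lyapunov

/-- `φ` is a strict Lyapunov function on `Ω` for the vector field `F`. -/
theorem phi_is_strict_lyapunov (π0 π1 π2 π3 : ℝ)
    (hπ0 : 0 < π0) (hπ0' : π0 < 1) (hπ1 : 0 < π1) (hπ2 : 0 < π2) (hπ3 : 0 < π3) :
    (∀ p ∈ Omega, 0 ≤ phi π0 π1 π2 π3 p.1 p.2 ∧
      (phi π0 π1 π2 π3 p.1 p.2 = 0 ↔
        p.1 = Lss π0 π1 π2 π3 ∧ p.2 = Lss π0 π1 π2 π3)) ∧
    (∀ p ∈ Omega, p ≠ (Lss π0 π1 π2 π3, Lss π0 π1 π2 π3) →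
      phiDot π0 π1 π2 π3 p.1 p.2 < 0) ∧
    phiDot π0 π1 π2 π3 (Lss π0 π1 π2 π3) (Lss π0 π1 π2 π3) = 0 := by
  have hk : 0 < π3 / π1 := div_pos hπ3 hπ1
  refine ⟨fun p _ => ⟨phi_nonneg hk.le _ _, phi_eq_zero_iff hk _ _⟩,
    fun p hp hne => phiDot_neg hπ0 hπ0' hπ1 hπ2 hπ3 hp hne, ?_⟩
  have hs := Lss_nonneg hπ0 hπ0' hπ1 hπ2 hπ3
  rw [phiDot_eq _ _ hπ1.ne' (by positivity)]
  ring
end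
end
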